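/- arXiv:1202.3817 — 7 statements merged into one kernel-verified Lean document; each statement's English description precedes it below -/
import Mathlib

section
/- If H is a finite-dimensional complex Hilbert space and U, V are unitary operators on H satisfying V⁻¹U²V = U³, then U V⁻¹ U V = V⁻¹ U V U (i.e., U commutes with V⁻¹UV). -/
/-!
Let `S` be the spectrum of `U`: a finite set of nonzero complex numbers, and `S² = S³` because
`V⋆U²V = U³` is unitarily conjugate to `U²`. Iterating gives `S^(2^k) = S^(3^k)`; following one
eigenvalue `l` through these equalities, pigeonhole on the finite set `S` shows that `l` is a root
of unity. If `N = 2^a n` (with `n` odd) kills all of `S`, then writing `l^(3^a) = μ^(2^a)` shows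
that `l` is also killed by `3^a n`, hence by `n`. Since `U` is normal, `Uⁿ = 1`, so the conjugate
`W = V⋆UV` satisfies `Wⁿ = 1` and `W² = U³`; as `n` is odd, `W = (W²)^((n+1)/2)` is a power
of `U`.
-/

section PowImage

variable {M : Type*} [Monoid M]

lemma Set.image_pow_image_pow (S : Set M) (a b : ℕ) :
    (· ^ b) '' ((· ^ a) '' S) = (· ^ (a * b)) '' S := by
  simp only [Set.image_image, ← pow_mul]

lemma Set.image_pow_pow_eq_of_image_pow_eq {S : Set M} {a b : ℕ}
    (h : (· ^ a) '' S = (· ^ b) '' S) (k : ℕ) :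
    (· ^ a ^ k) '' S = (· ^ b ^ k) '' S := by
  induction k with
  | zero => rfl
  | succ k ih =>
    calc (· ^ a ^ (k + 1)) '' S = (· ^ a ^ k) '' ((· ^ a) '' S) := by
          rw [Set.image_pow_image_pow, pow_succ']
      _ = (· ^ b) '' ((· ^ a ^ k) '' S) := by
          rw [h, Set.image_pow_image_pow, Set.image_pow_image_pow, mul_comm]
      _ = (· ^ b ^ (k + 1)) '' S := by rw [ih, Set.image_pow_image_pow, pow_succ]

end PowImage

section MonoidWithZero

variable {M : Type*} [MonoidWithZero M] [IsCancelMulZero M]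

lemma isOfFinOrder_of_pow_eq_pow {x : M} (hx : x ≠ 0) {m n : ℕ} (hmn : m < n)
    (h : x ^ n = x ^ m) : IsOfFinOrder x := by
  refine isOfFinOrder_iff_pow_eq_one.2 ⟨n - m, by omega, mul_left_cancel₀ (pow_ne_zero m hx) ?_⟩
  rw [← pow_add, add_tsub_cancel_of_le hmn.le, h, mul_one]

variable {S : Set M} (hS : S.Finite) (h0 : (0 : M) ∉ S) (h : (· ^ 2) '' S = (· ^ 3) '' S)
include hS h0 h

lemma isOfFinOrder_of_mem_of_image_sq_eq_image_cube {l : M} (hl : l ∈ S) : IsOfFinOrder l := by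
  have hmem (k : ℕ) : ∃ μ ∈ S, μ ^ 3 ^ k = l ^ 2 ^ k := by
    rw [← Set.mem_image, ← Set.image_pow_pow_eq_of_image_pow_eq h]
    exact Set.mem_image_of_mem _ hl
  choose μ hμS hμ using hmem
  obtain ⟨k, m, hkm, hμkm⟩ := Set.Finite.exists_lt_map_eq_of_forall_mem hμS hS
  obtain ⟨d, rfl⟩ := Nat.exists_eq_add_of_lt hkm
  have hpow : μ k ^ 3 ^ (k + d + 1) = μ k ^ (3 ^ k * 2 ^ (d + 1)) :=
    calc μ k ^ 3 ^ (k + d + 1) = l ^ 2 ^ (k + d + 1) := by rw [hμkm, hμ]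
      _ = (l ^ 2 ^ k) ^ 2 ^ (d + 1) := by rw [← pow_mul, ← pow_add, add_assoc]
      _ = μ k ^ (3 ^ k * 2 ^ (d + 1)) := by rw [← hμ, pow_mul]
  have hlt : 3 ^ k * 2 ^ (d + 1) < 3 ^ (k + d + 1) := by
    rw [add_assoc, pow_add 3 k]
    exact Nat.mul_lt_mul_of_pos_left (Nat.pow_lt_pow_left (by norm_num : 2 < 3) d.succ_ne_zero)
      (pow_pos three_pos k)
  have hμ_fin := isOfFinOrder_of_pow_eq_pow (fun h' => h0 (h' ▸ hμS k)) hlt hpow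
  have hl_pow : IsOfFinOrder (l ^ 2 ^ k) := hμ k ▸ hμ_fin.pow
  exact hl_pow.of_pow (pow_ne_zero k two_ne_zero)

lemma exists_odd_forall_pow_eq_one_of_image_sq_eq_image_cube :
    ∃ n, Odd n ∧ ∀ l ∈ S, l ^ n = 1 := by
  set N := ∏ l ∈ hS.toFinset, orderOf l
  have hN : N ≠ 0 := Finset.prod_ne_zero_iff.2 fun l hl =>
    (isOfFinOrder_of_mem_of_image_sq_eq_image_cube hS h0 h (hS.mem_toFinset.1 hl)).orderOf_pos.ne'
  have hpowN (l) (hl : l ∈ S) : l ^ N = 1 :=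
    orderOf_dvd_iff_pow_eq_one.1 (Finset.dvd_prod_of_mem _ (hS.mem_toFinset.2 hl))
  obtain ⟨a, n, hn, hNan⟩ := Nat.exists_eq_two_pow_mul_odd hN
  refine ⟨n, hn, fun l hl => ?_⟩
  obtain ⟨μ, hμS, hμ⟩ : l ^ 3 ^ a ∈ (· ^ 2 ^ a) '' S := by
    rw [Set.image_pow_pow_eq_of_image_pow_eq h]
    exact Set.mem_image_of_mem _ hl
  have h3 : l ^ (3 ^ a * n) = 1 := by
    rw [pow_mul, ← hμ, ← pow_mul, ← hNan, hpowN μ hμS]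
  have hgcd : (3 ^ a * n).gcd (2 ^ a * n) = n := by
    rw [Nat.gcd_mul_right, Nat.Coprime.pow a a (by norm_num : Nat.Coprime 3 2), one_mul]
  rw [← hgcd, pow_gcd_eq_one]
  exact ⟨h3, hNan ▸ hpowN l hl⟩

end MonoidWithZero

lemma image_pow_spectrum_eq_of_star_mul_pow_mul_eq {𝕜 A : Type*} [Field 𝕜] [IsAlgClosed 𝕜]
    [Ring A] [StarRing A] [Algebra 𝕜 A] {u v : A} (hv : v ∈ unitary A) {a b : ℕ}
    (ha : 0 < a) (hb : 0 < b) (h : star v * u ^ a * v = u ^ b) :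
    (· ^ a) '' spectrum 𝕜 u = (· ^ b) '' spectrum 𝕜 u := by
  rw [← spectrum.map_pow_of_pos u ha, ← spectrum.map_pow_of_pos u hb, ← h,
    Unitary.spectrum_star_left_conjugate (U := ⟨v, hv⟩)]

lemma pow_eq_one_of_forall_mem_spectrum {A : Type*} [CStarAlgebra A] {u : A} [IsStarNormal u]
    {n : ℕ} (h : ∀ z ∈ spectrum ℂ u, z ^ n = 1) : u ^ n = 1 := by
  rw [← cfc_pow_id (R := ℂ) u n, cfc_congr (g := 1) h, cfc_one ℂ u]

lemma Unitary.star_mul_pow_mul {R : Type*} [Monoid R] [StarMul R] {v : R} (hv : v ∈ unitary R)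
    (x : R) (n : ℕ) : (star v * x * v) ^ n = star v * x ^ n * v :=
  Units.conj_pow' (Unitary.toUnits ⟨v, hv⟩) x n

lemma Commute.of_sq_right_of_odd_pow_eq_one {M : Type*} [Monoid M] {u w : M} {n : ℕ} (hn : Odd n)
    (hw : w ^ n = 1) (h : Commute u (w ^ 2)) : Commute u w := by
  obtain ⟨k, rfl⟩ := hn
  have : w = (w ^ 2) ^ (k + 1) := by
    rw [← pow_mul, show 2 * (k + 1) = 2 * k + 1 + 1 by ring, pow_succ, hw, one_mul]
  rw [this]
  exact h.pow_right _

theorem stmt0 {H : Type*} [NormedAddCommGroup H] [InnerProductSpace ℂ H]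
    [FiniteDimensional ℂ H]
    (U V : H →L[ℂ] H) (hU : U ∈ unitary (H →L[ℂ] H)) (hV : V ∈ unitary (H →L[ℂ] H))
    (h : star V * U ^ 2 * V = U ^ 3) :
    U * (star V * U * V) = (star V * U * V) * U := by
  have : CompleteSpace H := FiniteDimensional.complete ℂ H
  have : IsStarNormal U := isStarNormal_of_mem_unitary hU
  have hfin : (spectrum ℂ U).Finite := by
    rw [ContinuousLinearMap.spectrum_eq]
    exact Module.End.finite_spectrum _
  obtain ⟨n, hn, hroot⟩ := exists_odd_forall_pow_eq_one_of_image_sq_eq_image_cube hfin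
    (spectrum.zero_notMem ℂ (Unitary.isUnit_coe (U := ⟨U, hU⟩)))
    (image_pow_spectrum_eq_of_star_mul_pow_mul_eq hV two_pos three_pos h)
  have hUn : U ^ n = 1 := pow_eq_one_of_forall_mem_spectrum hroot
  refine (Commute.of_sq_right_of_odd_pow_eq_one hn ?_ ?_).eq
  · rw [Unitary.star_mul_pow_mul hV, hUn, mul_one, Unitary.star_mul_self_of_mem hV]
  · rw [Unitary.star_mul_pow_mul hV, h]
    exact (Commute.refl U).pow_right 3
end

section
/- There exist unitary operators U, V on the Hilbert space ℓ²(ℕ × ℤ) and a unit vector ψ such that V⁻¹U²V = U³ but ⟨U V⁻¹ U V ψ, V⁻¹ U V U ψ⟩ = 0; in particular U V⁻¹ U V ≠ V⁻¹ U V U. -/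
/-!
A permutation `σ` of an index set acts unitarily on `ℓ²` by moving coordinates, sending
`lp.single 2 i 1` to `lp.single 2 (σ i) 1`, so it suffices to find permutations `u`, `v` of
`ℕ × ℤ` with `v⁻¹ u² v = u³` such that `u (v⁻¹ u v)` and `(v⁻¹ u v) u` differ at one point.
Take `u` the shift in the `ℤ`-coordinate. The orbits of `u³` and of `u²` are both indexed by a
copy of `ℕ` (pairs `(n, r)` with `r < 3`, resp. `r < 2`, numbered `3n + r`, resp. `2n + r`), and
`v` identifies them orbit by orbit, so that `u³`-steps become `u²`-steps.
-/

open scoped InnerProductSpace ENNReal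

theorem Memℓp.comp_equiv {α β E : Type*} [NormedAddCommGroup E] {p : ℝ≥0∞} {f : α → E}
    (hf : Memℓp f p) (e : β ≃ α) : Memℓp (f ∘ e) p := by
  rcases p.trichotomy with rfl | rfl | hp
  · rw [memℓp_zero_iff] at hf ⊢
    exact hf.preimage e.injective.injOn
  · rw [memℓp_infty_iff] at hf ⊢
    rwa [← EquivLike.range_comp _ e] at hf
  · rw [memℓp_gen_iff hp] at hf ⊢
    exact e.summable_iff.2 hf

namespace lp

section domCongr

variable {α β 𝕜 E : Type*} [NormedField 𝕜] [NormedAddCommGroup E] [NormedSpace 𝕜 E]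
  {p : ℝ≥0∞} [Fact (1 ≤ p)]

theorem norm_mk_comp_equiv (e : β ≃ α) (f : lp (fun _ : α => E) p) :
    ‖(⟨f ∘ e, (lp.memℓp f).comp_equiv e⟩ : lp (fun _ : β => E) p)‖ = ‖f‖ := by
  rcases p.dichotomy with rfl | hp
  · exact e.iSup_comp (g := fun a => ‖f a‖)
  · have hp : 0 < p.toReal := by linarith
    simp only [norm_eq_tsum_rpow hp]
    congr 1
    exact e.tsum_eq (fun a => ‖f a‖ ^ p.toReal)

variable (𝕜 E p) in
noncomputable def domCongr (e : α ≃ β) :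
    lp (fun _ : α => E) p ≃ₗᵢ[𝕜] lp (fun _ : β => E) p where
  toFun f := ⟨f ∘ e.symm, (lp.memℓp f).comp_equiv e.symm⟩
  invFun f := ⟨f ∘ e, (lp.memℓp f).comp_equiv e⟩
  left_inv f := lp.ext <| funext fun i => congrArg f (e.symm_apply_apply i)
  right_inv f := lp.ext <| funext fun i => congrArg f (e.apply_symm_apply i)
  map_add' _ _ := rfl
  map_smul' _ _ := rfl
  norm_map' := norm_mk_comp_equiv e.symm

theorem domCongr_single [DecidableEq α] [DecidableEq β] (e : α ≃ β) (i : α) (c : E) :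
    domCongr 𝕜 E p e (lp.single p i c) = lp.single p (e i) c :=
  lp.ext <| Pi.single_comp_equiv e.symm i c

variable (𝕜 E p) in
noncomputable def domCongrHom :
    Equiv.Perm α →* (lp (fun _ : α => E) p ≃ₗᵢ[𝕜] lp (fun _ : α => E) p) where
  toFun := domCongr 𝕜 E p
  map_one' := rfl
  map_mul' _ _ := rfl

end domCongr

section permUnitary

variable {α 𝕜 E : Type*} [RCLike 𝕜] [NormedAddCommGroup E] [InnerProductSpace 𝕜 E]
  [CompleteSpace E]

variable (𝕜 E) in
noncomputable def permUnitary :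
    Equiv.Perm α →* unitary (lp (fun _ : α => E) 2 →L[𝕜] lp (fun _ : α => E) 2) :=
  Unitary.linearIsometryEquiv.symm.toMonoidHom.comp (domCongrHom 𝕜 E 2)

theorem permUnitary_single [DecidableEq α] (σ : Equiv.Perm α) (i : α) (c : E) :
    (permUnitary 𝕜 E σ : lp (fun _ : α => E) 2 →L[𝕜] lp (fun _ : α => E) 2) (lp.single 2 i c) =
      lp.single 2 (σ i) c :=
  domCongr_single σ i c

end permUnitary

end lp

theorem Unitary.star_coe_monoidHom_apply {G A : Type*} [Group G] [Monoid A] [StarMul A]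
    (ρ : G →* unitary A) (g : G) : star (ρ g : A) = ρ g⁻¹ := by
  rw [map_inv, ← Unitary.star_eq_inv, Unitary.coe_star]

def shiftPerm : Equiv.Perm (ℕ × ℤ) := Equiv.prodCongr (Equiv.refl ℕ) (Equiv.addRight 1)

theorem shiftPerm_pow_apply (n : ℕ) (x : ℕ × ℤ) : (shiftPerm ^ n) x = (x.1, x.2 + n) := by
  induction n with
  | zero => simp
  | succ n ih =>
    rw [pow_succ', Equiv.Perm.mul_apply, ih]
    simp [shiftPerm, add_assoc]

/-- `(q, j) ↦ (j / d, q * d + j % d)`, mapping `ℤ × {j}` onto the `j`-th orbit of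
`shiftPerm ^ d`. -/
def foldEquiv (d : ℕ) [NeZero d] : ℤ × ℕ ≃ ℕ × ℤ :=
  (Equiv.prodCongr (Equiv.refl ℤ) (Nat.divModEquiv d)).trans <|
    (Equiv.prodAssoc ℤ ℕ (Fin d)).symm.trans <|
      (Equiv.prodCongr (Equiv.prodComm ℤ ℕ) (Equiv.refl (Fin d))).trans <|
        (Equiv.prodAssoc ℕ ℤ (Fin d)).trans
          (Equiv.prodCongr (Equiv.refl ℕ) (Int.divModEquiv d).symm)

theorem foldEquiv_apply (d : ℕ) [NeZero d] (q : ℤ) (j : ℕ) :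
    foldEquiv d (q, j) = (j / d, q * d + (j % d : ℕ)) := by
  simp [foldEquiv]

theorem foldEquiv_add_one (d : ℕ) [NeZero d] (q : ℤ) (j : ℕ) :
    foldEquiv d (q + 1, j) = (shiftPerm ^ d) (foldEquiv d (q, j)) := by
  simp only [foldEquiv_apply, shiftPerm_pow_apply, Prod.mk.injEq, true_and]
  ring

def regroupPerm : Equiv.Perm (ℕ × ℤ) := (foldEquiv 3).symm.trans (foldEquiv 2)

theorem regroupPerm_conj_shiftPerm_sq :
    regroupPerm⁻¹ * shiftPerm ^ 2 * regroupPerm = shiftPerm ^ 3 := by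
  rw [mul_assoc, inv_mul_eq_iff_eq_mul]
  ext1 x
  obtain ⟨⟨q, j⟩, rfl⟩ := (foldEquiv 3).surjective x
  simp only [Equiv.Perm.mul_apply, regroupPerm, Equiv.trans_apply, Equiv.symm_apply_apply,
    ← foldEquiv_add_one]

theorem stmt1 :
    ∃ (U V : lp (fun _ : ℕ × ℤ => ℂ) 2 →L[ℂ] lp (fun _ : ℕ × ℤ => ℂ) 2)
      (ψ : lp (fun _ : ℕ × ℤ => ℂ) 2),
      U ∈ unitary (lp (fun _ : ℕ × ℤ => ℂ) 2 →L[ℂ] lp (fun _ : ℕ × ℤ => ℂ) 2) ∧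
      V ∈ unitary (lp (fun _ : ℕ × ℤ => ℂ) 2 →L[ℂ] lp (fun _ : ℕ × ℤ => ℂ) 2) ∧
      ‖ψ‖ = 1 ∧
      star V * U ^ 2 * V = U ^ 3 ∧
      ⟪(U * (star V * U * V)) ψ, ((star V * U * V) * U) ψ⟫_ℂ = 0 ∧
      U * (star V * U * V) ≠ (star V * U * V) * U := by
  classical
  set ρ := lp.permUnitary ℂ ℂ (α := ℕ × ℤ)
  have hleft : (shiftPerm * (regroupPerm⁻¹ * shiftPerm * regroupPerm)) (0, 0) = (0, 2) := by
    decide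
  have hright : (regroupPerm⁻¹ * shiftPerm * regroupPerm * shiftPerm) (0, 0) = (0, 3) := by
    decide
  refine ⟨ρ shiftPerm, ρ regroupPerm, lp.single 2 (0, 0) 1, (ρ _).2, (ρ _).2,
    by simp [lp.norm_single], ?_, ?_⟩
  all_goals simp only [Unitary.star_coe_monoidHom_apply, ← Submonoid.coe_mul, ← SubmonoidClass.coe_pow,
    ← map_mul, ← map_pow]
  · rw [regroupPerm_conj_shiftPerm_sq]
  refine ⟨?_, fun hcomm => ?_⟩
  · rw [lp.permUnitary_single, lp.permUnitary_single, hleft, hright, lp.inner_single_left,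
      lp.single_apply_ne _ _ _ (by decide), inner_zero_right]
  · have h := congrArg (fun W => W (lp.single 2 (0, 0) (1 : ℂ)) (0, 2)) hcomm
    beta_reduce at h
    rw [lp.permUnitary_single, lp.permUnitary_single, hleft, hright, lp.single_apply_self,
      lp.single_apply_ne _ _ _ (by decide)] at h
    exact one_ne_zero h
end

section
/- Let U be a unitary operator on a d-dimensional Hilbert space and suppose that for every eigenvalue λ₀ ∈ ℝ/ℤ of U (written as e^{2πiλ₀}) there exists an eigenvalue λ₁ of U with 3λ₀ = 2λ₁ in ℝ/ℤ. Then every eigenvalue λ of U satisfies N·λ = 0 in ℝ/ℤ, where N = 3^d · lcm{3¹−2¹, …, 3^d−2^d}. -/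
/-!
Following the hypothesis from an eigenvalue `λ₀` produces eigenvalues `λ₀, λ₁, λ₂, …` with
`3 λₖ = 2 λₖ₊₁`, hence `3^k λᵢ = 2^k λᵢ₊ₖ`. Since `U` has at most `d` distinct eigenvalues,
`λᵢ = λⱼ` for some `i < j ≤ d`; with `k = j - i` this gives `(3^k - 2^k) λᵢ = 0`, and then
`3^i (3^k - 2^k) λ₀ = 2^i (3^k - 2^k) λᵢ = 0`. Finally `3^i (3^k - 2^k)` divides `N_d`.
-/

/-- `N_d = 3^d * lcm {3^1 - 2^1, …, 3^d - 2^d}`. -/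
def Npaper (d : ℕ) : ℕ := 3 ^ d * (Finset.Icc 1 d).lcm (fun j => 3 ^ j - 2 ^ j)

theorem exists_seq_of_forall_exists {α : Type*} {P : α → Prop} {R : α → α → Prop}
    (h : ∀ x, P x → ∃ y, P y ∧ R x y) {x : α} (hx : P x) :
    ∃ f : ℕ → α, f 0 = x ∧ (∀ k, P (f k)) ∧ ∀ k, R (f k) (f (k + 1)) := by
  choose next hnext using h
  let step : {x // P x} → {x // P x} := fun y => ⟨next y y.2, (hnext y y.2).1⟩
  refine ⟨fun k => (step^[k] ⟨x, hx⟩).1, rfl, fun k => (step^[k] ⟨x, hx⟩).2, fun k => ?_⟩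
  simp only [Function.iterate_succ_apply']
  exact (hnext _ _).2

section Recurrence

variable {G : Type*} {a b : ℕ} {f : ℕ → G}

theorem pow_nsmul_eq_pow_nsmul_add [AddCommMonoid G] (hf : ∀ k, a • f k = b • f (k + 1))
    (i k : ℕ) : a ^ k • f i = b ^ k • f (i + k) := by
  induction k with
  | zero => simp
  | succ k ih =>
    rw [pow_succ', mul_nsmul', ih, nsmul_left_comm, hf, ← mul_nsmul', ← pow_succ, ← add_assoc]

theorem pow_mul_pow_sub_pow_nsmul_eq_zero [AddCommGroup G] (hba : b ≤ a)
    (hf : ∀ k, a • f k = b • f (k + 1)) {i k : ℕ} (hrep : f i = f (i + k)) :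
    (a ^ i * (a ^ k - b ^ k)) • f 0 = 0 := by
  have hperiod : (a ^ k - b ^ k) • f i = 0 := by
    rw [sub_nsmul _ (Nat.pow_le_pow_left hba k), pow_nsmul_eq_pow_nsmul_add hf, ← hrep,
      add_neg_cancel]
  rw [mul_nsmul, pow_nsmul_eq_pow_nsmul_add hf, zero_add, nsmul_left_comm, hperiod, nsmul_zero]

end Recurrence

theorem Module.End.exists_lt_le_finrank_eq_of_hasEigenvalue {K V : Type*} [Field K]
    [AddCommGroup V] [Module K V] [FiniteDimensional K V] (T : Module.End K V) (μ : ℕ → K)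
    (hμ : ∀ k, T.HasEigenvalue (μ k)) :
    ∃ i j, i < j ∧ j ≤ Module.finrank K V ∧ μ i = μ j := by
  by_contra! hne
  have hinj : Function.Injective fun k : Fin (Module.finrank K V + 1) => μ k := by
    intro m n hmn
    rcases lt_trichotomy m n with hlt | heq | hgt
    · exact absurd hmn (hne m n hlt (by omega))
    · exact heq
    · exact absurd hmn.symm (hne n m hgt (by omega))
  choose v hv using fun k : Fin (Module.finrank K V + 1) => (hμ k).exists_hasEigenvector
  have hcard := (T.eigenvectors_linearIndependent' _ hinj v hv).fintype_card_le_finrank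
  simp at hcard

theorem Complex.exp_two_pi_I_mul_eq_toCircle (x : ℝ) :
    Complex.exp (2 * Real.pi * Complex.I * x) = AddCircle.toCircle (x : AddCircle (1 : ℝ)) := by
  rw [AddCircle.toCircle_apply_mk, Circle.coe_exp]
  push_cast
  ring_nf

theorem Complex.exp_two_pi_I_mul_eq_exp_iff {x y : ℝ} :
    Complex.exp (2 * Real.pi * Complex.I * x) = Complex.exp (2 * Real.pi * Complex.I * y) ↔
      (x : AddCircle (1 : ℝ)) = y := by
  simp only [Complex.exp_two_pi_I_mul_eq_toCircle]
  exact (Subtype.coe_injective.comp (AddCircle.injective_toCircle one_ne_zero)).eq_iff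

theorem pow_mul_pow_sub_pow_dvd_Npaper {i k d : ℕ} (hk : 1 ≤ k) (hikd : i + k ≤ d) :
    3 ^ i * (3 ^ k - 2 ^ k) ∣ Npaper d :=
  mul_dvd_mul (pow_dvd_pow 3 (by omega)) (Finset.dvd_lcm (Finset.mem_Icc.mpr ⟨hk, by omega⟩))

theorem stmt4_general {H : Type*} [NormedAddCommGroup H] [InnerProductSpace ℂ H]
    [FiniteDimensional ℂ H]
    (d : ℕ) (hdim : Module.finrank ℂ H = d)
    (U : H →L[ℂ] H)
    (h : ∀ l0 : ℝ,
      Module.End.HasEigenvalue (U : H →ₗ[ℂ] H)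
        (Complex.exp (2 * Real.pi * Complex.I * l0)) →
      ∃ l1 : ℝ,
        Module.End.HasEigenvalue (U : H →ₗ[ℂ] H)
          (Complex.exp (2 * Real.pi * Complex.I * l1)) ∧
        ((3 * l0 : ℝ) : AddCircle (1 : ℝ)) = ((2 * l1 : ℝ) : AddCircle (1 : ℝ))) :
    ∀ l : ℝ,
      Module.End.HasEigenvalue (U : H →ₗ[ℂ] H)
        (Complex.exp (2 * Real.pi * Complex.I * l)) →
      (((Npaper d : ℝ) * l : ℝ) : AddCircle (1 : ℝ)) = 0 := by
  intro l hl
  obtain ⟨μ, rfl, hμ, hstep⟩ := exists_seq_of_forall_exists h hl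
  have hrec : ∀ k, 3 • (μ k : AddCircle (1 : ℝ)) = 2 • (μ (k + 1) : AddCircle (1 : ℝ)) := by
    simpa only [← AddCircle.coe_nsmul, nsmul_eq_mul, Nat.cast_ofNat] using hstep
  obtain ⟨i, j, hij, hjd, hrep⟩ :=
    Module.End.exists_lt_le_finrank_eq_of_hasEigenvalue (U : H →ₗ[ℂ] H) _ hμ
  rw [Complex.exp_two_pi_I_mul_eq_exp_iff, ← Nat.add_sub_cancel' hij.le] at hrep
  obtain ⟨c, hc⟩ := pow_mul_pow_sub_pow_dvd_Npaper (d := d) (by omega : 1 ≤ j - i)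
    (by omega : i + (j - i) ≤ d)
  rw [← nsmul_eq_mul, AddCircle.coe_nsmul, hc, mul_nsmul,
    pow_mul_pow_sub_pow_nsmul_eq_zero (f := fun k => (μ k : AddCircle (1 : ℝ))) (by norm_num)
      hrec hrep, nsmul_zero]

theorem stmt4 {H : Type*} [NormedAddCommGroup H] [InnerProductSpace ℂ H]
    [FiniteDimensional ℂ H]
    (d : ℕ) (hd : 1 ≤ d) (hdim : Module.finrank ℂ H = d)
    (U : H →L[ℂ] H) (hU : U ∈ unitary (H →L[ℂ] H))
    (h : ∀ l0 : ℝ,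
      Module.End.HasEigenvalue (U : H →ₗ[ℂ] H)
        (Complex.exp (2 * Real.pi * Complex.I * l0)) →
      ∃ l1 : ℝ,
        Module.End.HasEigenvalue (U : H →ₗ[ℂ] H)
          (Complex.exp (2 * Real.pi * Complex.I * l1)) ∧
        ((3 * l0 : ℝ) : AddCircle (1 : ℝ)) = ((2 * l1 : ℝ) : AddCircle (1 : ℝ))) :
    ∀ l : ℝ,
      Module.End.HasEigenvalue (U : H →ₗ[ℂ] H)
        (Complex.exp (2 * Real.pi * Complex.I * l)) →
      (((Npaper d : ℝ) * l : ℝ) : AddCircle (1 : ℝ)) = 0 :=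
  stmt4_general d hdim U h
end

section
/- Let A be a finite subset of ℝ/ℤ of cardinality at most d such that for every λ₀ ∈ A there exists λ₁ ∈ A with 3λ₀ = 2λ₁. Then there exist integers k, n with 0 ≤ k, 1 ≤ n, k + n ≤ d, and an element λ ∈ A with 3^k(3^n − 2^n)·λ = 0 in ℝ/ℤ; moreover every element λ₀ ∈ A is torsion of order dividing N_d = 3^d · lcm{3¹−2¹, …, 3^d−2^d}. -/
open Function

theorem Finset.exists_isPeriodicPt_iterate_of_mapsTo {α : Type*} {f : α → α} {A : Finset α}
    {d : ℕ} (hf : Set.MapsTo f A A) (hcard : A.card ≤ d) {x : α} (hx : x ∈ A) :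
    ∃ k n, 0 < n ∧ k + n ≤ d ∧ IsPeriodicPt f n (f^[k] x) := by
  obtain ⟨i, hi, j, hj, hne, heq⟩ : ∃ i ∈ Finset.range (d + 1), ∃ j ∈ Finset.range (d + 1),
      i ≠ j ∧ f^[i] x = f^[j] x :=
    Finset.exists_ne_map_eq_of_card_lt_of_maps_to (by simpa using Nat.lt_succ_of_le hcard)
      fun j _ => hf.iterate j hx
  simp only [Finset.mem_range] at hi hj
  have periodic {a b : ℕ} (hab : a < b) (h : f^[a] x = f^[b] x) :
      IsPeriodicPt f (b - a) (f^[a] x) := by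
    rw [IsPeriodicPt, IsFixedPt, ← iterate_add_apply, Nat.sub_add_cancel hab.le, h]
  rcases Nat.lt_or_gt_of_ne hne with hlt | hlt
  · exact ⟨i, j - i, by omega, by omega, periodic hlt heq⟩
  · exact ⟨j, i - j, by omega, by omega, periodic hlt heq.symm⟩

theorem smul_eq_smul_iterate {R M : Type*} [CommMonoid R] [MulAction R M] {a b : R}
    {f : M → M} {s : Set M} (hf : Set.MapsTo f s s) (hfe : ∀ x ∈ s, a • x = b • f x)
    {x : M} (hx : x ∈ s) (j : ℕ) : a ^ j • x = b ^ j • f^[j] x := by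
  induction j with
  | zero => simp
  | succ j ih =>
    rw [iterate_succ_apply', pow_succ', mul_smul, ih, smul_comm, hfe _ (hf.iterate j hx),
      ← mul_smul, ← pow_succ]

theorem exists_pow_mul_sub_pow_smul_eq_zero {R M : Type*} [CommRing R] [AddCommGroup M]
    [Module R M] {a b : R} {A : Finset M} {d : ℕ} (hcard : A.card ≤ d)
    (h : ∀ x ∈ A, ∃ y ∈ A, a • x = b • y) {x : M} (hx : x ∈ A) :
    ∃ k n, 0 < n ∧ k + n ≤ d ∧ (a ^ k * (a ^ n - b ^ n)) • x = 0 := by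
  choose! f hfA hfe using h
  replace hfA : Set.MapsTo f A A := hfA
  obtain ⟨k, n, hn, hkn, hper⟩ := A.exists_isPeriodicPt_iterate_of_mapsTo hfA hcard hx
  set y := f^[k] x
  have hy : a ^ n • y = b ^ n • y := by
    have := smul_eq_smul_iterate hfA hfe (hfA.iterate k hx) n
    rwa [hper.eq] at this
  refine ⟨k, n, hn, hkn, ?_⟩
  calc (a ^ k * (a ^ n - b ^ n)) • x = (a ^ n - b ^ n) • a ^ k • x := by
        rw [mul_comm, mul_smul]
    _ = b ^ k • (a ^ n - b ^ n) • y := by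
        rw [smul_eq_smul_iterate hfA hfe hx k, smul_comm]
    _ = 0 := by rw [sub_smul, hy, sub_self, smul_zero]

theorem pow_mul_sub_pow_dvd_Npaper {d k n : ℕ} (hn : 0 < n) (hkn : k + n ≤ d) :
    (3 ^ k * (3 ^ n - 2 ^ n) : ℤ) ∣ Npaper d := by
  have hle : 2 ^ n ≤ 3 ^ n := Nat.pow_le_pow_left (by norm_num) n
  have hdvd : 3 ^ k * (3 ^ n - 2 ^ n) ∣ Npaper d :=
    mul_dvd_mul (pow_dvd_pow 3 (by omega)) (Finset.dvd_lcm (Finset.mem_Icc.2 ⟨hn, by omega⟩))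
  exact_mod_cast Int.natCast_dvd_natCast.2 hdvd

theorem stmt5 (d : ℕ) (A : Finset (AddCircle (1 : ℝ))) (hA : A.Nonempty)
    (hcard : A.card ≤ d)
    (h : ∀ l0 ∈ A, ∃ l1 ∈ A, (3 : ℤ) • l0 = (2 : ℤ) • l1) :
    (∃ (k n : ℕ) (l : AddCircle (1 : ℝ)), 1 ≤ n ∧ k + n ≤ d ∧ l ∈ A ∧
      ((3 ^ k * (3 ^ n - 2 ^ n) : ℤ)) • l = 0) ∧
    ∀ l0 ∈ A, (Npaper d : ℤ) • l0 = 0 := by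
  refine ⟨?_, fun l0 hl0 => ?_⟩
  · obtain ⟨l, hl⟩ := hA
    obtain ⟨k, n, hn, hkn, hzero⟩ := exists_pow_mul_sub_pow_smul_eq_zero hcard h hl
    exact ⟨k, n, l, hn, hkn, hl, hzero⟩
  · obtain ⟨k, n, hn, hkn, hzero⟩ := exists_pow_mul_sub_pow_smul_eq_zero hcard h hl0
    obtain ⟨c, hc⟩ := pow_mul_sub_pow_dvd_Npaper hn hkn
    rw [hc, mul_comm, mul_smul, hzero, smul_zero]
end

section
/- Let U, W be unitary operators on a finite-dimensional Hilbert space such that W² commutes with U and every eigenvector of W² is an eigenvector of W, and every eigenvector of U² is an eigenvector of U. If moreover W² = U³, then W commutes with U. -/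
/-!
A unitary operator is normal, and for a normal operator the range is orthogonal to the kernel,
so `(U - μ)^k x = 0` forces `(U - μ) x = 0`: generalized eigenvectors of `U` are eigenvectors, and
over `ℂ` the eigenvectors of `U` span `H`. If `U x = μ x`, then `W² x = U³ x = μ³ x`, so `x` is an
eigenvector of `W` as well, and `W U x = U W x`.
-/

lemma IsStarNormal.sub_smul_one {R A : Type*} [CommSemiring R] [StarRing R] [Ring A] [StarRing A]
    [Algebra R A] [StarModule R A] {a : A} (ha : IsStarNormal a) (r : R) :
    IsStarNormal (a - r • 1) :=
  have : Commute a (star (r • 1)) := by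
    rw [star_smul, star_one]; exact (Commute.one_right a).smul_right _
  this.isStarNormal_sub

namespace ContinuousLinearMap

variable {𝕜 E : Type*} [RCLike 𝕜] [NormedAddCommGroup E] [InnerProductSpace 𝕜 E]
  [CompleteSpace E] {T : E →L[𝕜] E}

lemma IsStarNormal.apply_eq_zero_of_apply_apply_eq_zero (hT : IsStarNormal T) {x : E}
    (hx : T (T x) = 0) : T x = 0 := by
  have hmem : T x ∈ T.range ⊓ T.rangeᗮ := ⟨⟨x, rfl⟩, IsStarNormal.orthogonal_range hT ▸ hx⟩
  simpa [Submodule.inf_orthogonal_eq_bot] using hmem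

lemma IsStarNormal.apply_eq_zero_of_pow_apply_eq_zero (hT : IsStarNormal T) {x : E} :
    ∀ {k : ℕ}, (T ^ k) x = 0 → T x = 0
  | 0, hx => by simp_all
  | k + 1, hx => by
    rw [pow_succ, mul_apply_eq_comp] at hx
    exact IsStarNormal.apply_eq_zero_of_apply_apply_eq_zero hT
      (IsStarNormal.apply_eq_zero_of_pow_apply_eq_zero hT hx)

lemma IsStarNormal.maxGenEigenspace_eq_eigenspace (hT : IsStarNormal T) (μ : 𝕜) :
    Module.End.maxGenEigenspace (T : Module.End 𝕜 E) μ = Module.End.eigenspace T μ := by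
  refine le_antisymm (fun x hx ↦ ?_) Module.End.eigenspace_le_maxGenEigenspace
  obtain ⟨k, hk⟩ := (Module.End.mem_maxGenEigenspace _ _ _).1 hx
  have hN : ((T - μ • 1 : E →L[𝕜] E) : Module.End 𝕜 E) = (T : Module.End 𝕜 E) - μ • 1 := by
    simp
  rw [← hN, ← toLinearMap_pow] at hk
  rw [Module.End.mem_eigenspace_iff, ← sub_eq_zero]
  simpa using IsStarNormal.apply_eq_zero_of_pow_apply_eq_zero (hT.sub_smul_one μ) hk

lemma IsStarNormal.iSup_eigenspace_eq_top {E : Type*} [NormedAddCommGroup E]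
    [InnerProductSpace ℂ E] [FiniteDimensional ℂ E] {T : E →L[ℂ] E} (hT : IsStarNormal T) :
    ⨆ μ : ℂ, Module.End.eigenspace (T : Module.End ℂ E) μ = ⊤ := by
  simpa only [IsStarNormal.maxGenEigenspace_eq_eigenspace hT] using
    Module.End.iSup_maxGenEigenspace_eq_top (T : Module.End ℂ E)

end ContinuousLinearMap

lemma Module.End.ext_of_iSup_eigenspace_eq_top {K V V' : Type*} [Field K] [AddCommGroup V]
    [Module K V] [AddCommGroup V'] [Module K V'] {f : Module.End K V}
    (hf : ⨆ μ : K, f.eigenspace μ = ⊤)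
    {g g' : V →ₗ[K] V'} (h : ∀ μ x, f.HasEigenvector μ x → g x = g' x) : g = g' := by
  rw [← sub_eq_zero, ← LinearMap.ker_eq_top, eq_top_iff, ← hf, iSup_le_iff]
  intro μ x hx
  rcases eq_or_ne x 0 with rfl | hx0
  · exact Submodule.zero_mem _
  · exact sub_eq_zero.2 (h μ x ⟨hx, hx0⟩)

theorem stmt8_general {H : Type*} [NormedAddCommGroup H] [InnerProductSpace ℂ H]
    [FiniteDimensional ℂ H]
    (U W : H →L[ℂ] H) (hU : U ∈ unitary (H →L[ℂ] H))
    (hWev : ∀ (ξ : H) (μ : ℂ), ξ ≠ 0 → (W ^ 2) ξ = μ • ξ → ∃ ν : ℂ, W ξ = ν • ξ)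
    (h : W ^ 2 = U ^ 3) :
    W * U = U * W := by
  have hUdiag := ContinuousLinearMap.IsStarNormal.iSup_eigenspace_eq_top
    (isStarNormal_of_mem_unitary hU)
  refine ContinuousLinearMap.coe_injective
    (Module.End.ext_of_iSup_eigenspace_eq_top hUdiag fun μ x hx ↦ ?_)
  have hUx : U x = μ • x := hx.apply_eq_smul
  have hW2x : (W ^ 2) x = μ ^ 3 • x := by
    rw [h, ← ContinuousLinearMap.coe_coe, ContinuousLinearMap.toLinearMap_pow, hx.pow_apply]
  obtain ⟨ν, hWx⟩ := hWev x (μ ^ 3) hx.2 hW2x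
  simp [hUx, hWx, smul_smul, mul_comm]

theorem stmt8 {H : Type*} [NormedAddCommGroup H] [InnerProductSpace ℂ H]
    [FiniteDimensional ℂ H]
    (U W : H →L[ℂ] H) (hU : U ∈ unitary (H →L[ℂ] H)) (hW : W ∈ unitary (H →L[ℂ] H))
    (hcomm : W ^ 2 * U = U * W ^ 2)
    (hWev : ∀ (ξ : H) (μ : ℂ), ξ ≠ 0 → (W ^ 2) ξ = μ • ξ → ∃ ν : ℂ, W ξ = ν • ξ)
    (hUev : ∀ (ξ : H) (μ : ℂ), ξ ≠ 0 → (U ^ 2) ξ = μ • ξ → ∃ ν : ℂ, U ξ = ν • ξ)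
    (h : W ^ 2 = U ^ 3) :
    W * U = U * W :=
  stmt8_general U W hU hWev h
end

section
/- Let U, V be unitary operators on a Hilbert space of dimension at most d (d ≥ 3) with ‖V⁻¹U²V − U³‖ < ε in operator norm, where ε < 1/(6·3^d·d·N_d) and N_d = 3^d·lcm{3¹−2¹,…,3^d−2^d}. Then ‖U V⁻¹ U V − V⁻¹ U V U‖ < 4 d³ N_d ε. -/
section NormedRing

variable {R : Type*} [NormedRing R]

theorem norm_pow_mul_le_of_norm_le_one {b : R} (hb : ‖b‖ ≤ 1) (x : R) (n : ℕ) :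
    ‖b ^ n * x‖ ≤ ‖x‖ := by
  induction n with
  | zero => simp
  | succ n ih =>
    rw [pow_succ', mul_assoc]
    exact (norm_mul_le _ _).trans ((mul_le_of_le_one_left (norm_nonneg _) hb).trans ih)

theorem norm_pow_sub_pow_le_of_norm_le_one {a b : R} (ha : ‖a‖ ≤ 1) (hb : ‖b‖ ≤ 1) (n : ℕ) :
    ‖a ^ n - b ^ n‖ ≤ n * ‖a - b‖ := by
  induction n with
  | zero => simp
  | succ n ih =>
    calc ‖a ^ (n + 1) - b ^ (n + 1)‖ = ‖(a ^ n - b ^ n) * a + b ^ n * (a - b)‖ := by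
          rw [pow_succ, pow_succ]; noncomm_ring
      _ ≤ ‖a ^ n - b ^ n‖ * ‖a‖ + ‖a - b‖ :=
          (norm_add_le _ _).trans
            (add_le_add (norm_mul_le _ _) (norm_pow_mul_le_of_norm_le_one hb _ n))
      _ ≤ n * ‖a - b‖ * 1 + ‖a - b‖ := by gcongr
      _ = (n + 1 : ℕ) * ‖a - b‖ := by push_cast; ring

theorem norm_mul_sub_mul_le_of_commute {u w p : R} (hu : ‖u‖ ≤ 1) (hup : Commute u p) :
    ‖u * w - w * u‖ ≤ 2 * ‖w - p‖ := by
  have key : u * w - w * u = u * (w - p) - (w - p) * u := by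
    rw [mul_sub, sub_mul, hup.eq]; abel
  calc ‖u * w - w * u‖ ≤ ‖u‖ * ‖w - p‖ + ‖w - p‖ * ‖u‖ := by
        rw [key]; exact (norm_sub_le _ _).trans (add_le_add (norm_mul_le _ _) (norm_mul_le _ _))
    _ ≤ 2 * ‖w - p‖ := by nlinarith [norm_nonneg (w - p)]

theorem norm_mul_sub_mul_lt_of_norm_sq_sub_cube_lt {u w : R} (hu : ‖u‖ ≤ 1) (hw : ‖w‖ ≤ 1)
    {N : ℕ} (hN : Odd N) {ε : ℝ} (h : ‖w ^ 2 - u ^ 3‖ < ε) (hwN : ‖w ^ N - 1‖ ≤ N * ε) :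
    ‖u * w - w * u‖ < 4 * N * ε := by
  obtain ⟨k, rfl⟩ := hN
  have hε : 0 < ε := (norm_nonneg _).trans_lt h
  have hw_near : ‖w - w ^ (2 * (k + 1))‖ ≤ (2 * k + 1 : ℕ) * ε := by
    calc ‖w - w ^ (2 * (k + 1))‖ = ‖(w ^ (2 * k + 1) - 1) * w‖ := by
          rw [norm_sub_rev, sub_mul, one_mul, ← pow_succ, mul_add, mul_one]
      _ ≤ ‖w ^ (2 * k + 1) - 1‖ * ‖w‖ := norm_mul_le _ _
      _ ≤ (2 * k + 1 : ℕ) * ε * 1 := by gcongr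
      _ = (2 * k + 1 : ℕ) * ε := mul_one _
  have hpow_near : ‖w ^ (2 * (k + 1)) - u ^ (3 * (k + 1))‖ < (k + 1 : ℕ) * ε := by
    have hw2 : ‖w ^ 2‖ ≤ 1 := (norm_pow_le' w two_pos).trans (pow_le_one₀ (norm_nonneg w) hw)
    have hu3 : ‖u ^ 3‖ ≤ 1 := (norm_pow_le' u three_pos).trans (pow_le_one₀ (norm_nonneg u) hu)
    rw [pow_mul, pow_mul]
    calc ‖(w ^ 2) ^ (k + 1) - (u ^ 3) ^ (k + 1)‖ ≤ (k + 1 : ℕ) * ‖w ^ 2 - u ^ 3‖ :=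
          norm_pow_sub_pow_le_of_norm_le_one hw2 hu3 _
      _ < (k + 1 : ℕ) * ε := by gcongr
  calc ‖u * w - w * u‖ ≤ 2 * ‖w - u ^ (3 * (k + 1))‖ :=
        norm_mul_sub_mul_le_of_commute hu ((Commute.refl u).pow_right _)
    _ ≤ 2 * (‖w - w ^ (2 * (k + 1))‖ + ‖w ^ (2 * (k + 1)) - u ^ (3 * (k + 1))‖) := by
        gcongr; exact norm_sub_le_norm_sub_add_norm_sub _ _ _
    _ < 2 * ((2 * k + 1 : ℕ) * ε + (k + 1 : ℕ) * ε) := by linarith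
    _ ≤ 4 * (2 * k + 1 : ℕ) * ε := by push_cast; nlinarith

variable [NormOneClass R]

theorem norm_pow_le_one_of_norm_le_one {x : R} (hx : ‖x‖ ≤ 1) (n : ℕ) : ‖x ^ n‖ ≤ 1 :=
  (norm_pow_le x n).trans (pow_le_one₀ (norm_nonneg x) hx)

theorem norm_pow_sub_one_le {x : R} (hx : ‖x‖ ≤ 1) (n : ℕ) : ‖x ^ n - 1‖ ≤ n * ‖x - 1‖ := by
  simpa using norm_pow_sub_pow_le_of_norm_le_one hx norm_one.le n

theorem norm_pow_sub_one_le_of_dvd {x : R} (hx : ‖x‖ ≤ 1) {e n : ℕ} (hen : e ∣ n) {c : ℝ}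
    (h : ‖x ^ e - 1‖ ≤ e * c) : ‖x ^ n - 1‖ ≤ n * c := by
  obtain ⟨t, rfl⟩ := hen
  calc ‖x ^ (e * t) - 1‖ = ‖(x ^ e) ^ t - 1‖ := by rw [pow_mul]
    _ ≤ t * ‖x ^ e - 1‖ := norm_pow_sub_one_le (norm_pow_le_one_of_norm_le_one hx e) t
    _ ≤ t * (e * c) := by gcongr
    _ = (e * t : ℕ) * c := by push_cast; ring

end NormedRing

theorem norm_pow_three_pow_sub_pow_two_pow_le {s : ℕ → ℂ} {ε : ℝ} (hs : ∀ k, ‖s k‖ ≤ 1)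
    (hstep : ∀ k, ‖s k ^ 3 - s (k + 1) ^ 2‖ ≤ ε) (k i : ℕ) :
    ‖s i ^ 3 ^ k - s (i + k) ^ 2 ^ k‖ ≤ (3 ^ k - 2 ^ k) * ε := by
  induction k generalizing i with
  | zero => simp
  | succ k ih =>
    have hpow : ∀ j n, ‖s j ^ n‖ ≤ 1 := fun j => norm_pow_le_one_of_norm_le_one (hs j)
    have h₁ : ‖(s i ^ 3) ^ 3 ^ k - (s (i + 1) ^ 2) ^ 3 ^ k‖ ≤ 3 ^ k * ε := by
      calc _ ≤ (3 ^ k : ℕ) * ‖s i ^ 3 - s (i + 1) ^ 2‖ :=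
            norm_pow_sub_pow_le_of_norm_le_one (hpow i 3) (hpow (i + 1) 2) _
        _ ≤ 3 ^ k * ε := by push_cast; gcongr; exact hstep i
    have h₂ : ‖(s (i + 1) ^ 3 ^ k) ^ 2 - (s (i + 1 + k) ^ 2 ^ k) ^ 2‖ ≤
        2 * ((3 ^ k - 2 ^ k) * ε) := by
      calc _ ≤ (2 : ℕ) * ‖s (i + 1) ^ 3 ^ k - s (i + 1 + k) ^ 2 ^ k‖ :=
            norm_pow_sub_pow_le_of_norm_le_one (hpow _ _) (hpow _ _) 2
        _ ≤ 2 * ((3 ^ k - 2 ^ k) * ε) := by push_cast; gcongr; exact ih (i + 1)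
    calc ‖s i ^ 3 ^ (k + 1) - s (i + (k + 1)) ^ 2 ^ (k + 1)‖
        = ‖((s i ^ 3) ^ 3 ^ k - (s (i + 1) ^ 2) ^ 3 ^ k)
            + ((s (i + 1) ^ 3 ^ k) ^ 2 - (s (i + 1 + k) ^ 2 ^ k) ^ 2)‖ := by
          ring_nf
      _ ≤ 3 ^ k * ε + 2 * ((3 ^ k - 2 ^ k) * ε) := (norm_add_le _ _).trans (add_le_add h₁ h₂)
      _ = (3 ^ (k + 1) - 2 ^ (k + 1)) * ε := by ring

theorem norm_pow_sub_pow_eq_norm_pow_sub_one {μ : ℂ} (hμ : ‖μ‖ = 1) {m n : ℕ} (hnm : n ≤ m) :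
    ‖μ ^ m - μ ^ n‖ = ‖μ ^ (m - n) - 1‖ := by
  rw [← Nat.sub_add_cancel hnm, pow_add, ← sub_one_mul, norm_mul, norm_pow, hμ, one_pow, mul_one,
    Nat.add_sub_cancel]

def lcmThreePowSubTwoPow (d : ℕ) : ℕ := (Finset.Icc 1 d).lcm fun j => 3 ^ j - 2 ^ j

theorem norm_pow_lcmThreePowSubTwoPow_sub_one_le {μ : ℂ} (hμ : ‖μ‖ = 1) {m d : ℕ}
    (hm : m ∈ Finset.Icc 1 d) {ε : ℝ} (h : ‖μ ^ 3 ^ m - μ ^ 2 ^ m‖ ≤ (3 ^ m - 2 ^ m) * ε) :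
    ‖μ ^ lcmThreePowSubTwoPow d - 1‖ ≤ lcmThreePowSubTwoPow d * ε := by
  have h23 : 2 ^ m ≤ 3 ^ m := Nat.pow_le_pow_left (by norm_num) m
  refine norm_pow_sub_one_le_of_dvd hμ.le (Finset.dvd_lcm hm) ?_
  rwa [← norm_pow_sub_pow_eq_norm_pow_sub_one hμ h23, Nat.cast_sub h23, Nat.cast_pow,
    Nat.cast_pow, Nat.cast_ofNat, Nat.cast_ofNat]

theorem norm_pow_Npaper_sub_one_le_of_cycle {s : ℕ → ℂ} {ε : ℝ} (hs : ∀ k, ‖s k‖ = 1)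
    (hstep : ∀ k, ‖s k ^ 3 - s (k + 1) ^ 2‖ ≤ ε) {i j d : ℕ} (hij : i < j) (hjd : j ≤ d)
    (hsij : s i = s j) : ‖s 0 ^ Npaper d - 1‖ ≤ Npaper d * ε := by
  have hchain := norm_pow_three_pow_sub_pow_two_pow_le (fun k => (hs k).le) hstep
  have hpow : ∀ k n, ‖s k ^ n‖ ≤ 1 := fun k => norm_pow_le_one_of_norm_le_one (hs k).le
  set L := lcmThreePowSubTwoPow d
  have hsL : ‖s i ^ L - 1‖ ≤ L * ε := by
    refine norm_pow_lcmThreePowSubTwoPow_sub_one_le (hs i) (m := j - i)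
      (Finset.mem_Icc.mpr ⟨by omega, by omega⟩) ?_
    simpa only [Nat.add_sub_cancel' hij.le, ← hsij] using hchain (j - i) i
  have h₁ : ‖(s 0 ^ 3 ^ i) ^ L - (s i ^ 2 ^ i) ^ L‖ ≤ L * ((3 ^ i - 2 ^ i) * ε) := by
    calc _ ≤ L * ‖s 0 ^ 3 ^ i - s i ^ 2 ^ i‖ := norm_pow_sub_pow_le_of_norm_le_one
          (hpow 0 _) (hpow i _) _
      _ ≤ L * ((3 ^ i - 2 ^ i) * ε) := by
          gcongr; simpa only [zero_add] using hchain i 0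
  have h₂ : ‖(s i ^ L) ^ 2 ^ i - 1‖ ≤ (2 ^ i : ℕ) * (L * ε) :=
    (norm_pow_sub_one_le (hpow i L) _).trans (by gcongr)
  have h₃ : ‖s 0 ^ (3 ^ i * L) - 1‖ ≤ (3 ^ i * L : ℕ) * ε := by
    calc ‖s 0 ^ (3 ^ i * L) - 1‖
        = ‖((s 0 ^ 3 ^ i) ^ L - (s i ^ 2 ^ i) ^ L) + ((s i ^ L) ^ 2 ^ i - 1)‖ := by ring_nf
      _ ≤ L * ((3 ^ i - 2 ^ i) * ε) + (2 ^ i : ℕ) * (L * ε) :=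
          (norm_add_le _ _).trans (add_le_add h₁ h₂)
      _ = (3 ^ i * L : ℕ) * ε := by push_cast; ring
  refine norm_pow_sub_one_le_of_dvd (hs 0).le ⟨3 ^ (d - i), ?_⟩ h₃
  rw [Npaper, mul_comm (3 ^ i), mul_assoc, ← pow_add, mul_comm, Nat.add_sub_cancel' (by omega)]
  rfl

theorem norm_pow_Npaper_sub_one_le {S : Set ℂ} {d : ℕ} (hfin : S.Finite) (hcard : S.ncard ≤ d)
    (hS : ∀ x ∈ S, ‖x‖ = 1) {ε : ℝ} (hstep : ∀ x ∈ S, ∃ y ∈ S, ‖x ^ 3 - y ^ 2‖ ≤ ε) {x : ℂ}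
    (hx : x ∈ S) : ‖x ^ Npaper d - 1‖ ≤ Npaper d * ε := by
  choose! f hfS hf using hstep
  have hsS : ∀ k, f^[k] x ∈ S := fun k => Set.MapsTo.iterate hfS k hx
  have hsucc : ∀ k, f^[k + 1] x = f (f^[k] x) := fun k => Function.iterate_succ_apply' f k x
  have hrange : S.ncard < (Finset.range (d + 1) : Set ℕ).ncard := by
    rw [Set.ncard_coe_finset, Finset.card_range]; omega
  obtain ⟨i, hi, j, hj, hne, heq⟩ :=
    Set.exists_ne_map_eq_of_ncard_lt_of_maps_to hrange (fun k _ => hsS k) hfin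
  simp only [Finset.coe_range, Set.mem_Iio] at hi hj
  have hcycle := fun {i j : ℕ} (hij : i < j) (hjd : j ≤ d) (heq : f^[i] x = f^[j] x) =>
    norm_pow_Npaper_sub_one_le_of_cycle (s := fun k => f^[k] x) (fun k => hS _ (hsS k))
      (fun k => hsucc k ▸ hf _ (hsS k)) hij hjd heq
  rcases hne.lt_or_gt with hij | hji
  · exact hcycle hij (by omega) heq
  · exact hcycle hji (by omega) heq.symm

theorem odd_Npaper (d : ℕ) : Odd (Npaper d) := by
  have hprod : Odd (∏ j ∈ Finset.Icc 1 d, (3 ^ j - 2 ^ j)) :=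
    Finset.prod_induction _ Odd (fun _ _ => Odd.mul) odd_one fun j hj =>
      Nat.Odd.sub_even (Nat.pow_le_pow_left (by norm_num) j) (Odd.pow (by decide))
        (Nat.even_pow.mpr ⟨even_two, by have := (Finset.mem_Icc.mp hj).1; omega⟩)
  exact (Odd.pow (by decide)).mul
    (hprod.of_dvd_nat (Finset.lcm_dvd fun j hj => Finset.dvd_prod_of_mem _ hj))

section CStarAlgebra

variable {A : Type*} [CStarAlgebra A]

theorem IsStarNormal.norm_le_of_forall_mem_spectrum {a : A} [IsStarNormal a] {c : ℝ} (hc : 0 ≤ c)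
    (h : ∀ z ∈ spectrum ℂ a, ‖z‖ ≤ c) : ‖a‖ ≤ c :=
  cfc_id' ℂ a ▸ norm_cfc_le hc h

theorem IsStarNormal.norm_pow_sub_one_le {a : A} [IsStarNormal a] {n : ℕ} {c : ℝ} (hc : 0 ≤ c)
    (h : ∀ z ∈ spectrum ℂ a, ‖z ^ n - 1‖ ≤ c) : ‖a ^ n - 1‖ ≤ c := by
  rw [← cfc_pow_id (R := ℂ) a n, ← cfc_const_one ℂ a, ← cfc_sub ..]
  exact norm_cfc_le hc h

theorem IsStarNormal.exists_mem_spectrum_norm_sub_lt {a b : A} [IsStarNormal a] {ε : ℝ}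
    (hab : ‖a - b‖ < ε) {z : ℂ} (hz : z ∈ spectrum ℂ b) : ∃ w ∈ spectrum ℂ a, ‖z - w‖ < ε := by
  -- Otherwise `‖(z - a)⁻¹‖ ≤ ε⁻¹` by normality, so `z - b`, which is `ε`-close to `z - a`,
  -- would be invertible.
  by_contra! hfar
  have hε : 0 < ε := (norm_nonneg _).trans_lt hab
  have : Nontrivial A :=
    not_subsingleton_iff_nontrivial.mp fun _ => by simp [spectrum.of_subsingleton] at hz
  obtain ⟨u, hu⟩ : IsUnit (algebraMap ℂ A z - a) :=
    spectrum.notMem_iff.mp fun hza => by simpa using hε.trans_le (hfar z hza)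
  have : IsStarNormal (u : A) := by
    rw [hu, ← cfc_id' ℂ a, ← cfc_const z a, ← cfc_sub ..]
    infer_instance
  have hinv : ‖(↑u⁻¹ : A)‖ ≤ ε⁻¹ := by
    refine IsStarNormal.norm_le_of_forall_mem_spectrum (by positivity) fun k hk => ?_
    rw [← spectrum.map_inv, hu, ← spectrum.singleton_sub_eq] at hk
    obtain ⟨_, rfl, w, hw, hkw⟩ := hk
    rw [← inv_inv k, norm_inv, ← hkw]
    exact inv_anti₀ hε (hfar w hw)
  have hnear : ‖(algebraMap ℂ A z - b) - u‖ < ‖(↑u⁻¹ : A)‖⁻¹ := by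
    rw [hu, sub_sub_sub_cancel_left]
    exact hab.trans_le ((le_inv_comm₀ hε (Units.norm_pos u⁻¹)).mpr hinv)
  exact hz (u.ofNearby _ hnear).isUnit

theorem norm_le_one_of_mem_unitary {u : A} (hu : u ∈ unitary A) : ‖u‖ ≤ 1 := by
  nontriviality A
  exact (CStarRing.norm_of_mem_unitary hu).le

theorem exists_mem_spectrum_norm_pow_three_sub_pow_two_lt {u v : A} (hu : u ∈ unitary A)
    (hv : v ∈ unitary A) {ε : ℝ} (h : ‖star v * u ^ 2 * v - u ^ 3‖ < ε) {z : ℂ}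
    (hz : z ∈ spectrum ℂ u) : ∃ w ∈ spectrum ℂ u, ‖z ^ 3 - w ^ 2‖ < ε := by
  have hspec_pow := spectrum.map_pow_of_nonempty (𝕜 := ℂ) ⟨z, hz⟩
  have := isStarNormal_of_mem_unitary (mul_mem (mul_mem (Unitary.star_mem hv) (pow_mem hu 2)) hv)
  obtain ⟨_, hw, hzw⟩ := IsStarNormal.exists_mem_spectrum_norm_sub_lt h
    (hspec_pow 3 ▸ Set.mem_image_of_mem _ hz)
  rw [Unitary.spectrum_star_left_conjugate (U := ⟨v, hv⟩), hspec_pow] at hw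
  obtain ⟨w, hw, rfl⟩ := hw
  exact ⟨w, hw, hzw⟩

end CStarAlgebra

theorem Module.End.ncard_spectrum_le_finrank {K V : Type*} [Field K] [AddCommGroup V] [Module K V]
    [FiniteDimensional K V] (f : Module.End K V) :
    (spectrum K f).ncard ≤ Module.finrank K V := by
  choose v hv using fun μ : spectrum K f =>
    (Module.End.hasEigenvalue_iff_mem_spectrum.mpr μ.2).exists_hasEigenvector
  have := f.finite_spectrum.fintype
  rw [← Nat.card_coe_set_eq, Nat.card_eq_fintype_card]
  exact (f.eigenvectors_linearIndependent _ v hv).fintype_card_le_finrank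

theorem stmt12_general {H : Type*} [NormedAddCommGroup H] [InnerProductSpace ℂ H]
    [FiniteDimensional ℂ H]
    (d : ℕ) (hd : 3 ≤ d) (hdim : Module.finrank ℂ H ≤ d)
    (U V : H →L[ℂ] H) (hU : U ∈ unitary (H →L[ℂ] H)) (hV : V ∈ unitary (H →L[ℂ] H))
    (ε : ℝ)
    (h : ‖star V * U ^ 2 * V - U ^ 3‖ < ε) :
    ‖U * (star V * U * V) - (star V * U * V) * U‖ < 4 * d ^ 3 * Npaper d * ε := by
  have hε : 0 ≤ ε := (norm_nonneg _).trans h.le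
  set W := star V * U * V
  have hW : W ∈ unitary (H →L[ℂ] H) := mul_mem (mul_mem (Unitary.star_mem hV) hU) hV
  have hσW : spectrum ℂ W = spectrum ℂ U := Unitary.spectrum_star_left_conjugate (U := ⟨V, hV⟩)
  have hW2 : W ^ 2 = star V * U ^ 2 * V := by
    simpa using (map_pow (Unitary.conjStarAlgAut ℂ _ (star ⟨V, hV⟩)) U 2).symm
  have hσ : spectrum ℂ U = spectrum ℂ (U : Module.End ℂ H) := ContinuousLinearMap.spectrum_eq
  have hσU : ∀ z ∈ spectrum ℂ U, ‖z ^ Npaper d - 1‖ ≤ Npaper d * ε := fun z hz =>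
    norm_pow_Npaper_sub_one_le (hσ ▸ Module.End.finite_spectrum _)
      (hσ ▸ (Module.End.ncard_spectrum_le_finrank _).trans hdim)
      (fun _ hx => spectrum.norm_eq_one_of_unitary hU hx)
      (fun x hx => (exists_mem_spectrum_norm_pow_three_sub_pow_two_lt hU hV h hx).imp
        fun _ ⟨hy, hxy⟩ => ⟨hy, hxy.le⟩) hz
  have := isStarNormal_of_mem_unitary hW
  have hWN : ‖W ^ Npaper d - 1‖ ≤ Npaper d * ε :=
    IsStarNormal.norm_pow_sub_one_le (by positivity) (hσW ▸ hσU)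
  calc ‖U * W - W * U‖ < 4 * Npaper d * ε :=
        norm_mul_sub_mul_lt_of_norm_sq_sub_cube_lt (norm_le_one_of_mem_unitary hU)
          (norm_le_one_of_mem_unitary hW) (odd_Npaper d) (hW2 ▸ h) hWN
    _ ≤ 4 * d ^ 3 * Npaper d * ε := by
        have : (1 : ℝ) ≤ d ^ 3 := one_le_pow₀ (by exact_mod_cast (by omega : 1 ≤ d))
        gcongr
        linarith

theorem stmt12 {H : Type*} [NormedAddCommGroup H] [InnerProductSpace ℂ H]
    [FiniteDimensional ℂ H]
    (d : ℕ) (hd : 3 ≤ d) (hdim : Module.finrank ℂ H ≤ d)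
    (U V : H →L[ℂ] H) (hU : U ∈ unitary (H →L[ℂ] H)) (hV : V ∈ unitary (H →L[ℂ] H))
    (ε : ℝ) (hε : ε < 1 / (6 * 3 ^ d * d * Npaper d))
    (h : ‖star V * U ^ 2 * V - U ^ 3‖ < ε) :
    ‖U * (star V * U * V) - (star V * U * V) * U‖ < 4 * d ^ 3 * Npaper d * ε :=
  stmt12_general d hd hdim U V hU hV ε h
end

section
/- Let U, V be unitaries on a finite-dimensional Hilbert space with ‖V U³ − U² V‖ < ε, and let P_λ, P_{λ'} be the spectral projections of U onto eigenvalues e^{2πiλ}, e^{2πiλ'}. If the circle distance |3λ − 2λ'| exceeds some δ > 0, then ‖P_{λ'} V P_λ‖ < ε / |e^{2πiδ} − 1| (in particular ‖P_{λ'} V P_λ‖ ≤ ε / |e^{2πi(3λ−2λ')} − 1|). -/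
/-!
Sandwiching `V U³ - U² V` between `P'` and `P`: `U³` acts on the range of `P` as the scalar
`c³ = e^{6πiλ}`, and, because `U` is unitary and `P'` self-adjoint, `U²` acts on the left of `P'`
as `c'² = e^{4πiλ'}`. Hence `P' (V U³ - U² V) P = (c³ - c'²) • P' V P`, and since projections have
norm at most one, `|c³ - c'²| ‖P' V P‖ ≤ ‖V U³ - U² V‖ < ε`. Finally
`|c³ - c'²| = |e^{2πi(3λ - 2λ')} - 1| = 2 sin (π |3λ - 2λ'|)`, which is strictly increasing in
the circle distance on `[0, 1/2]` and so exceeds `|e^{2πiδ} - 1| > 0`.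
-/

open Real

section Eigen

variable {R A : Type*} [CommSemiring R] [Semiring A] [Algebra R A]

theorem pow_mul_eq_smul_of_mul_eq_smul {u p : A} {c : R} (h : u * p = c • p) (n : ℕ) :
    u ^ n * p = c ^ n • p := by
  induction n with
  | zero => simp
  | succ n ih => rw [pow_succ', mul_assoc, ih, mul_smul_comm, h, smul_smul, pow_succ]

theorem mul_pow_eq_smul_of_mul_eq_smul {u p : A} {c : R} (h : p * u = c • p) (n : ℕ) :
    p * u ^ n = c ^ n • p := by
  induction n with
  | zero => simp
  | succ n ih => rw [pow_succ, ← mul_assoc, ih, smul_mul_assoc, h, smul_smul, pow_succ]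

end Eigen

theorem mul_eq_smul_of_mem_unitary_of_mul_eq_smul {R A : Type*} [CommSemiring R] [StarRing R]
    [Semiring A] [StarRing A] [Algebra R A] [StarModule R A] {u q : A} {c : R}
    (hu : u ∈ unitary A) (hq : IsSelfAdjoint q) (hc : c ∈ unitary R) (h : u * q = c • q) :
    q * u = c • q := by
  have hstar : q * star u = star c • q := by
    simpa only [star_mul, star_smul, hq.star_eq] using congrArg star h
  calc q * u = (c * star c) • (q * u) := by rw [Unitary.mul_star_self_of_mem hc, one_smul]
    _ = c • (q * star u * u) := by rw [hstar, smul_mul_assoc, smul_smul]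
    _ = c • q := by rw [mul_assoc, Unitary.star_mul_self_of_mem hu, mul_one]

theorem norm_sub_mul_norm_mul_mul_le {𝕜 A : Type*} [NormedField 𝕜] [NormedRing A] [StarRing A]
    [CStarRing A] [NormedAlgebra 𝕜 A] {p q x y : A} {a b : 𝕜} (hp : IsStarProjection p)
    (hq : IsStarProjection q) (hx : x * p = a • p) (hy : q * y = b • q) (v : A) :
    ‖a - b‖ * ‖q * v * p‖ ≤ ‖v * x - y * v‖ := by
  have hcompress : q * (v * x - y * v) * p = (a - b) • (q * v * p) := by
    rw [mul_sub, sub_mul, sub_smul, mul_assoc q, mul_assoc v, hx, ← mul_assoc q y, hy]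
    simp only [mul_smul_comm, smul_mul_assoc, mul_assoc]
  calc ‖a - b‖ * ‖q * v * p‖ = ‖q * (v * x - y * v) * p‖ := by rw [hcompress, norm_smul]
    _ ≤ ‖q‖ * ‖v * x - y * v‖ * ‖p‖ := norm_mul₃_le
    _ ≤ 1 * ‖v * x - y * v‖ * 1 := by gcongr <;> [exact hq.norm_le; exact hp.norm_le]
    _ = ‖v * x - y * v‖ := by ring

theorem norm_exp_two_pi_mul_I_mul (t : ℝ) : ‖Complex.exp (2 * π * Complex.I * t)‖ = 1 := by
  simp [Complex.norm_exp]

theorem exp_two_pi_mul_I_mul_mem_unitary (t : ℝ) :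
    Complex.exp (2 * π * Complex.I * t) ∈ unitary ℂ := by
  rw [Unitary.mem_iff_star_mul_self, Complex.star_def, Complex.conj_mul',
    norm_exp_two_pi_mul_I_mul]
  norm_num

theorem norm_exp_two_pi_mul_I_mul_pow_sub_pow (l l' : ℝ) (m n : ℕ) :
    ‖Complex.exp (2 * π * Complex.I * l) ^ m - Complex.exp (2 * π * Complex.I * l') ^ n‖
      = ‖Complex.exp (2 * π * Complex.I * (m * l - n * l' : ℝ)) - 1‖ := by
  have hfactor : Complex.exp (2 * π * Complex.I * l) ^ m - Complex.exp (2 * π * Complex.I * l') ^ n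
      = Complex.exp (2 * π * Complex.I * l') ^ n *
          (Complex.exp (2 * π * Complex.I * (m * l - n * l' : ℝ)) - 1) := by
    rw [← Complex.exp_nat_mul, ← Complex.exp_nat_mul, mul_sub, mul_one, ← Complex.exp_add]
    congr 2
    push_cast
    ring
  rw [hfactor, norm_mul, norm_pow, norm_exp_two_pi_mul_I_mul, one_pow, one_mul]

theorem norm_exp_two_pi_mul_I_mul_sub_one (t : ℝ) :
    ‖Complex.exp (2 * π * Complex.I * t) - 1‖ = 2 * |sin (π * t)| := by
  rw [show 2 * π * Complex.I * t = Complex.I * (2 * π * t : ℝ) by push_cast; ring,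
    Complex.norm_exp_I_mul_ofReal_sub_one, norm_mul, Real.norm_two, Real.norm_eq_abs]
  ring_nf

theorem abs_sin_pi_mul_eq_sin_pi_mul_norm (t : ℝ) :
    |sin (π * t)| = sin (π * ‖(t : AddCircle (1 : ℝ))‖) := by
  have hperiod : |sin (π * t)| = |sin (π * (t - round t))| := by
    rw [mul_sub, mul_comm π (round t : ℝ), sin_sub_int_mul_pi, abs_mul, abs_neg_one_zpow, one_mul]
  have hsmall : |π * (t - round t)| ≤ π := by
    rw [abs_mul, abs_of_pos pi_pos]
    nlinarith [abs_sub_round t, pi_pos]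
  rw [hperiod, abs_sin_eq_sin_abs_of_abs_le_pi hsmall, UnitAddCircle.norm_eq, abs_mul,
    abs_of_pos pi_pos]

theorem norm_coe_unitAddCircle_le_half (t : ℝ) : ‖(t : AddCircle (1 : ℝ))‖ ≤ 1 / 2 := by
  simpa using AddCircle.norm_le_half_period (1 : ℝ) (x := (t : AddCircle (1 : ℝ))) one_ne_zero

theorem norm_exp_two_pi_mul_I_mul_sub_one_lt {δ t : ℝ} (hδ : 0 ≤ δ)
    (h : δ < ‖(t : AddCircle (1 : ℝ))‖) :
    ‖Complex.exp (2 * π * Complex.I * δ) - 1‖ < ‖Complex.exp (2 * π * Complex.I * t) - 1‖ := by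
  have hhalf := norm_coe_unitAddCircle_le_half t
  rw [norm_exp_two_pi_mul_I_mul_sub_one, norm_exp_two_pi_mul_I_mul_sub_one,
    abs_sin_pi_mul_eq_sin_pi_mul_norm t,
    abs_of_nonneg (sin_nonneg_of_nonneg_of_le_pi (by positivity) (by nlinarith [pi_pos]))]
  gcongr
  exact sin_lt_sin_of_lt_of_le_pi_div_two (by nlinarith [pi_pos]) (by nlinarith [pi_pos])
    (by gcongr)

theorem norm_exp_two_pi_mul_I_mul_sub_one_pos {δ : ℝ} (h₀ : 0 < δ) (h₁ : δ < 1) :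
    0 < ‖Complex.exp (2 * π * Complex.I * δ) - 1‖ := by
  rw [norm_exp_two_pi_mul_I_mul_sub_one]
  have := sin_pos_of_pos_of_lt_pi (x := π * δ) (by positivity) (by nlinarith [pi_pos])
  positivity

theorem stmt17_general {H : Type*} [NormedAddCommGroup H] [InnerProductSpace ℂ H]
    [FiniteDimensional ℂ H]
    (U V P P' : H →L[ℂ] H)
    (hU : U ∈ unitary (H →L[ℂ] H))
    (l l' : ℝ)
    (hP : IsIdempotentElem P) (hPsa : IsSelfAdjoint P)
    (hP' : IsIdempotentElem P') (hP'sa : IsSelfAdjoint P')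
    (hUP : U * P = Complex.exp (2 * Real.pi * Complex.I * l) • P)
    (hUP' : U * P' = Complex.exp (2 * Real.pi * Complex.I * l') • P')
    (ε δ : ℝ) (hδ : 0 < δ)
    (hdist : δ < ‖((3 * l - 2 * l' : ℝ) : AddCircle (1 : ℝ))‖)
    (h : ‖V * U ^ 3 - U ^ 2 * V‖ < ε) :
    ‖P' * V * P‖ < ε / ‖Complex.exp (2 * Real.pi * Complex.I * δ) - 1‖ ∧
    ‖P' * V * P‖ ≤
      ε / ‖Complex.exp (2 * Real.pi * Complex.I * (3 * l - 2 * l')) - 1‖ := by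
  have hU3 : U ^ 3 * P = Complex.exp (2 * π * Complex.I * l) ^ 3 • P :=
    pow_mul_eq_smul_of_mul_eq_smul hUP 3
  have hU2 : P' * U ^ 2 = Complex.exp (2 * π * Complex.I * l') ^ 2 • P' :=
    mul_pow_eq_smul_of_mul_eq_smul (mul_eq_smul_of_mem_unitary_of_mul_eq_smul hU hP'sa
      (exp_two_pi_mul_I_mul_mem_unitary l') hUP') 2
  have hkey := norm_sub_mul_norm_mul_mul_le ⟨hP, hPsa⟩ ⟨hP', hP'sa⟩ hU3 hU2 V
  rw [norm_exp_two_pi_mul_I_mul_pow_sub_pow] at hkey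
  push_cast at hkey
  have hlt := norm_exp_two_pi_mul_I_mul_sub_one_lt hδ.le hdist
  push_cast at hlt
  have hpos := norm_exp_two_pi_mul_I_mul_sub_one_pos hδ
    (by linarith [norm_coe_unitAddCircle_le_half (3 * l - 2 * l')])
  have hbound :
      ‖P' * V * P‖ * ‖Complex.exp (2 * π * Complex.I * (3 * l - 2 * l')) - 1‖ < ε := by
    rw [mul_comm]
    exact hkey.trans_lt h
  constructor
  · rw [lt_div_iff₀ hpos]
    exact (mul_le_mul_of_nonneg_left hlt.le (norm_nonneg _)).trans_lt hbound
  · exact (le_div_iff₀ (hpos.trans hlt)).2 hbound.le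

theorem stmt17 {H : Type*} [NormedAddCommGroup H] [InnerProductSpace ℂ H]
    [FiniteDimensional ℂ H]
    (U V P P' : H →L[ℂ] H)
    (hU : U ∈ unitary (H →L[ℂ] H)) (hV : V ∈ unitary (H →L[ℂ] H))
    (l l' : ℝ)
    (hP : IsIdempotentElem P) (hPsa : IsSelfAdjoint P)
    (hP' : IsIdempotentElem P') (hP'sa : IsSelfAdjoint P')
    (hUP : U * P = Complex.exp (2 * Real.pi * Complex.I * l) • P)
    (hUP' : U * P' = Complex.exp (2 * Real.pi * Complex.I * l') • P')
    (ε δ : ℝ) (hδ : 0 < δ)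
    (hdist : δ < ‖((3 * l - 2 * l' : ℝ) : AddCircle (1 : ℝ))‖)
    (h : ‖V * U ^ 3 - U ^ 2 * V‖ < ε) :
    ‖P' * V * P‖ < ε / ‖Complex.exp (2 * Real.pi * Complex.I * δ) - 1‖ ∧
    ‖P' * V * P‖ ≤
      ε / ‖Complex.exp (2 * Real.pi * Complex.I * (3 * l - 2 * l')) - 1‖ :=
  stmt17_general U V P P' hU l l' hP hPsa hP' hP'sa hUP hUP' ε δ hδ hdist h
end
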